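/- Let F be a forest on n \ge 1 vertices in which every vertex of degree at most 1 belongs to a distinguished set B of t vertices, and every vertex of degree 2 outside B has both neighbors in B. Then n \le 3t - 3 (for t \ge 2). -/

import Mathlib

/-!
In a forest with at least one edge, the degrees of the non-isolated vertices sum to at most
twice their number minus two. Every non-boundary vertex has degree at least two, and the `d` of
them whose degree is not two have degree at least three; so if `p` boundary vertices are
non-isolated and `s` is the boundary degree sum, then `s + d + 2 ≤ 2p`. Both edges at a
non-boundary vertex of degree two go into the boundary, so the number `a` of such vertices
satisfies `2a ≤ s`; also `p ≤ s` and `p ≤ t`. Hence `d ≤ t - 2` and `a ≤ t - 1`.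
-/

open Finset

namespace SimpleGraph

variable {V : Type*} [Fintype V] {G : SimpleGraph V}

theorem IsAcyclic.card_edgeFinset_lt_card [Nonempty V] [Fintype G.edgeSet]
    (hG : G.IsAcyclic) : #G.edgeFinset < Fintype.card V := by
  classical
  obtain ⟨T, hGT, -, hT⟩ := connected_top.exists_isTree_le_of_le_of_isAcyclic le_top hG
  calc #G.edgeFinset ≤ #T.edgeFinset := card_le_card (edgeFinset_mono hGT)
    _ < Fintype.card V := by rw [← hT.card_edgeFinset]; omega

variable [DecidableRel G.Adj]

theorem IsAcyclic.card_edgeFinset_lt_card_support (hG : G.IsAcyclic)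
    (hE : G.edgeFinset.Nonempty) : #G.edgeFinset < #{v | 0 < G.degree v} := by
  classical
  obtain ⟨e, he⟩ := hE
  induction e using Sym2.ind with
  | _ v _ =>
  have : Nonempty G.support := ⟨⟨v, (mem_edgeFinset.1 he).left_mem_support⟩⟩
  rw [← card_edgeFinset_induce_support]
  calc _ < Fintype.card G.support := (hG.induce _).card_edgeFinset_lt_card
    _ = _ := by
      rw [Fintype.card_subtype]
      simp only [degree_pos_iff_mem_support]

theorem card_filter_degree_pos_le_sum_degree (s : Finset V) :
    #{v ∈ s | 0 < G.degree v} ≤ ∑ v ∈ s, G.degree v :=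
  calc #{v ∈ s | 0 < G.degree v} = ∑ v ∈ s with 0 < G.degree v, 1 := card_eq_sum_ones _
    _ ≤ ∑ v ∈ s with 0 < G.degree v, G.degree v := sum_le_sum fun _ hv => (mem_filter.1 hv).2
    _ ≤ ∑ v ∈ s, G.degree v := sum_le_sum_of_subset (filter_subset _ _)

theorem sum_degree_le_sum_degree_of_neighborFinset_subset {X B : Finset V}
    (h : ∀ v ∈ X, G.neighborFinset v ⊆ B) :
    ∑ v ∈ X, G.degree v ≤ ∑ b ∈ B, G.degree b := calc
  ∑ v ∈ X, G.degree v = ∑ v ∈ X, #(B.bipartiteAbove G.Adj v) := by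
    refine sum_congr rfl fun v hv => ?_
    rw [← card_neighborFinset_eq_degree, bipartiteAbove]
    congr 1
    ext w
    simpa using fun hw => h v hv ((mem_neighborFinset _ _ _).2 hw)
  _ = ∑ b ∈ B, #(X.bipartiteBelow G.Adj b) := sum_card_bipartiteAbove_eq_sum_card_bipartiteBelow _
  _ ≤ ∑ b ∈ B, G.degree b := by
    gcongr with b
    rw [← card_neighborFinset_eq_degree]
    exact card_le_card fun w hw => by simpa [bipartiteBelow, adj_comm] using (mem_filter.1 hw).2

variable [DecidableEq V]

theorem IsAcyclic.sum_degree_add_two_le (hG : G.IsAcyclic) (hE : G.edgeFinset.Nonempty)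
    (B : Finset V) :
    ∑ v ∈ B, G.degree v + ∑ v ∈ Bᶜ, G.degree v + 2 ≤ 2 * (#{v ∈ B | 0 < G.degree v} + #Bᶜ) := by
  have hsupport : #{v | 0 < G.degree v} ≤ #{v ∈ B | 0 < G.degree v} + #Bᶜ :=
    (card_le_card fun v hv => by by_cases v ∈ B <;> simp_all).trans (card_union_le _ _)
  have := hG.card_edgeFinset_lt_card_support hE
  rw [sum_add_sum_compl, sum_degrees_eq_twice_card_edges]
  omega

variable {B : Finset V}

theorem two_mul_card_degree_eq_two_le_sum_degree
    (hdeg2 : ∀ v, v ∉ B → G.degree v = 2 → ∀ w, G.Adj v w → w ∈ B) :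
    2 * #{v ∈ Bᶜ | G.degree v = 2} ≤ ∑ b ∈ B, G.degree b :=
  calc 2 * #{v ∈ Bᶜ | G.degree v = 2} = ∑ v ∈ Bᶜ with G.degree v = 2, G.degree v := by
        rw [sum_congr rfl fun v hv => (mem_filter.1 hv).2, sum_const, smul_eq_mul, mul_comm]
    _ ≤ ∑ b ∈ B, G.degree b :=
        sum_degree_le_sum_degree_of_neighborFinset_subset fun v hv w hw => by
          simp only [mem_filter, mem_compl] at hv
          exact hdeg2 v hv.1 hv.2 w ((mem_neighborFinset _ _ _).1 hw)

theorem two_mul_card_compl_add_card_degree_ne_two_le (hdeg1 : ∀ v, G.degree v ≤ 1 → v ∈ B) :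
    2 * #Bᶜ + #{v ∈ Bᶜ | G.degree v ≠ 2} ≤ ∑ v ∈ Bᶜ, G.degree v := by
  rw [card_filter, mul_comm, ← smul_eq_mul, ← sum_const, ← sum_add_distrib]
  refine sum_le_sum fun v hv => ?_
  have := mt (hdeg1 v) (mem_compl.1 hv)
  split_ifs <;> omega

end SimpleGraph

open SimpleGraph

theorem stmt18_general {V : Type*} [Fintype V] [DecidableEq V] (F : SimpleGraph V)
    [DecidableRel F.Adj] (hF : F.IsAcyclic) (B : Finset V) (t : ℕ)
    (hB : B.card = t) (ht : 2 ≤ t)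
    (hdeg1 : ∀ v, F.degree v ≤ 1 → v ∈ B)
    (hdeg2 : ∀ v, v ∉ B → F.degree v = 2 → ∀ w, F.Adj v w → w ∈ B) :
    Fintype.card V ≤ 3 * t - 3 := by
  rcases F.edgeFinset.eq_empty_or_nonempty with hE | hE
  · have hV : univ ⊆ B := fun v _ => hdeg1 v ((F.degree_le_card_edgeFinset v).trans (by simp [hE]))
    have := card_le_card hV
    rw [card_univ] at this
    omega
  have hforest := hF.sum_degree_add_two_le hE B
  have hdeg2_count := two_mul_card_degree_eq_two_le_sum_degree hdeg2
  have hcompl := two_mul_card_compl_add_card_degree_ne_two_le hdeg1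
  have hpos := card_filter_degree_pos_le_sum_degree (G := F) B
  have hpos_le : #{v ∈ B | 0 < F.degree v} ≤ t := hB ▸ card_filter_le _ _
  have hsplit : #{v ∈ Bᶜ | F.degree v = 2} + #{v ∈ Bᶜ | F.degree v ≠ 2} = #Bᶜ :=
    card_filter_add_card_filter_not _
  have hcard : Fintype.card V = t + #Bᶜ := by
    rw [card_compl, hB]
    have := B.card_le_univ
    omega
  have hdeg_ne_two : #{v ∈ Bᶜ | F.degree v ≠ 2} + 2 ≤ t := by omega
  have hdeg_eq_two : #{v ∈ Bᶜ | F.degree v = 2} + 1 ≤ t := by omega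
  omega

/-- Let `F` be a forest on `n ≥ 1` vertices with a distinguished boundary set `B` of `t`
vertices, such that every vertex of degree at most `1` lies in `B`, and every vertex of
degree `2` outside `B` has both neighbors in `B`. Then for `t ≥ 2`, `n ≤ 3t - 3`. -/
theorem stmt18 {V : Type*} [Fintype V] [DecidableEq V] (F : SimpleGraph V)
    [DecidableRel F.Adj] (hF : F.IsAcyclic) (B : Finset V) (t : ℕ)
    (hB : B.card = t) (ht : 2 ≤ t) (hn : 1 ≤ Fintype.card V)
    (hdeg1 : ∀ v, F.degree v ≤ 1 → v ∈ B)
    (hdeg2 : ∀ v, v ∉ B → F.degree v = 2 → ∀ w, F.Adj v w → w ∈ B) :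
    Fintype.card V ≤ 3 * t - 3 :=
  stmt18_general F hF B t hB ht hdeg1 hdeg2
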